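/- Let A₁, A₂ ⊆ ℝ^m be convex sets with A₁ ∩ A₂ ≠ ∅, and set E = (A₁ × A₁) ∪ (A₂ × A₂). Then the separately convex hull of E is E^sc = E ∪ [(A₁ ∩ A₂) × conv(A₁ ∪ A₂)] ∪ [conv(A₁ ∪ A₂) × (A₁ ∩ A₂)]. Consequently, the diagonalized-symmetrized hull satisfies Ê^sc := widehat(E^sc) = E. -/

import Mathlib

open Set

/-- Separate convexity (with vectorial components) of a subset of a product space. -/
def SepConvex {α : Type*} [AddCommGroup α] [Module ℝ α] (E : Set (α × α)) : Prop :=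
  ∀ p ∈ E, ∀ q ∈ E, ∀ t : ℝ, t ∈ Set.Icc (0:ℝ) 1 → (p.1 = q.1 ∨ p.2 = q.2) →
    t • p + (1 - t) • q ∈ E

/-- The separately convex hull: smallest separately convex superset. -/
def sepConvexHull {α : Type*} [AddCommGroup α] [Module ℝ α] (E : Set (α × α)) : Set (α × α) :=
  ⋂₀ {F : Set (α × α) | E ⊆ F ∧ SepConvex F}

/-- Diagonalized and symmetrized version Ê of a set E. -/
def hatSet {α : Type*} (E : Set (α × α)) : Set (α × α) :=
  {p ∈ E | (p.1, p.1) ∈ E ∧ (p.2, p.1) ∈ E ∧ (p.2, p.2) ∈ E}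

/-- `P` is a maximal Cartesian subset of `E`. -/
def IsMaxCart {α : Type*} (E P : Set (α × α)) : Prop :=
  ∃ A : Set α, P = A ×ˢ A ∧ P ⊆ E ∧ ∀ B : Set α, A ⊆ B → B ×ˢ B ⊆ E → B = A

/-!
A set is separately convex exactly when all its horizontal and vertical slices are convex.
With `C = conv (A₁ ∪ A₂)`, the candidate set is invariant under swapping the factors, and its
horizontal slice through `x` is `C`, `A₁`, `A₂`, `A₁ ∩ A₂` or `∅` according to where `x` lies;
so it is separately convex and contains the hull. Conversely, the slice of the hull through a
point of `A₁ ∩ A₂` is convex and contains `A₁ ∪ A₂`, hence contains `C`. Finally, the diagonal of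
the candidate set is that of `E`, which cuts its hat down to `E`.
-/

section SepConvex

variable {α : Type*} [AddCommGroup α] [Module ℝ α] {E F : Set (α × α)}

theorem sepConvexHull_subset (hEF : E ⊆ F) (hF : SepConvex F) : sepConvexHull E ⊆ F :=
  sInter_subset_of_mem ⟨hEF, hF⟩

theorem subset_sepConvexHull (E : Set (α × α)) : E ⊆ sepConvexHull E :=
  subset_sInter fun _ hF => hF.1

theorem sepConvex_sepConvexHull (E : Set (α × α)) : SepConvex (sepConvexHull E) :=
  fun p hp q hq t ht hpq => mem_sInter.2 fun F hF => hF.2 p (hp F hF) q (hq F hF) t ht hpq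

theorem sepConvex_iff_convex_slices :
    SepConvex F ↔ (∀ x, Convex ℝ ((x, ·) ⁻¹' F)) ∧ ∀ y, Convex ℝ ((·, y) ⁻¹' F) := by
  constructor
  · intro hF
    refine ⟨fun x u hu v hv a b ha hb hab => ?_, fun y u hu v hv a b ha hb hab => ?_⟩
    · obtain rfl : b = 1 - a := by linarith
      simpa [← add_smul] using hF _ hu _ hv a ⟨ha, by linarith⟩ (Or.inl rfl)
    · obtain rfl : b = 1 - a := by linarith
      simpa [← add_smul] using hF _ hu _ hv a ⟨ha, by linarith⟩ (Or.inr rfl)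
  · rintro ⟨hrow, hcol⟩ ⟨x, u⟩ hp ⟨x', v⟩ hq t ⟨ht0, ht1⟩ (h | h)
    · obtain rfl : x = x' := h
      simpa [← add_smul] using hrow x hp hq ht0 (sub_nonneg.2 ht1) (add_sub_cancel t 1)
    · obtain rfl : u = v := h
      simpa [← add_smul] using hcol u hp hq ht0 (sub_nonneg.2 ht1) (add_sub_cancel t 1)

theorem sepConvex_of_swap_preimage_eq (hswap : Prod.swap ⁻¹' F = F)
    (hrow : ∀ x, Convex ℝ ((x, ·) ⁻¹' F)) : SepConvex F := by
  refine sepConvex_iff_convex_slices.2 ⟨hrow, fun y => ?_⟩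
  rw [← hswap]
  exact hrow y

theorem SepConvex.prod_convexHull_subset (hF : SepConvex F) {s t : Set α} (hst : s ×ˢ t ⊆ F) :
    s ×ˢ convexHull ℝ t ⊆ F := by
  rintro ⟨x, y⟩ ⟨hx, hy⟩
  exact convexHull_min (fun v hv => show (x, v) ∈ F from hst ⟨hx, hv⟩)
    ((sepConvex_iff_convex_slices.1 hF).1 x) hy

theorem SepConvex.convexHull_prod_subset (hF : SepConvex F) {s t : Set α} (hst : s ×ˢ t ⊆ F) :
    convexHull ℝ s ×ˢ t ⊆ F := by
  rintro ⟨x, y⟩ ⟨hx, hy⟩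
  exact convexHull_min (fun u hu => show (u, y) ∈ F from hst ⟨hu, hy⟩)
    ((sepConvex_iff_convex_slices.1 hF).2 y) hx

end SepConvex

section TwoWells

variable {α : Type*} {A₁ A₂ C : Set α}

theorem swap_preimage_twoWells :
    Prod.swap ⁻¹' (A₁ ×ˢ A₁ ∪ A₂ ×ˢ A₂ ∪ (A₁ ∩ A₂) ×ˢ C ∪ C ×ˢ (A₁ ∩ A₂)) =
      A₁ ×ˢ A₁ ∪ A₂ ×ˢ A₂ ∪ (A₁ ∩ A₂) ×ˢ C ∪ C ×ˢ (A₁ ∩ A₂) := by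
  simp only [preimage_union, preimage_swap_prod, union_right_comm _ (C ×ˢ _)]

open Classical in
theorem mk_preimage_twoWells (h₁C : A₁ ⊆ C) (h₂C : A₂ ⊆ C) (x : α) :
    (x, ·) ⁻¹' (A₁ ×ˢ A₁ ∪ A₂ ×ˢ A₂ ∪ (A₁ ∩ A₂) ×ˢ C ∪ C ×ˢ (A₁ ∩ A₂)) =
      if x ∈ A₁ ∩ A₂ then C else if x ∈ A₁ then A₁ else if x ∈ A₂ then A₂
        else if x ∈ C then A₁ ∩ A₂ else ∅ := by
  ext y
  simp only [mem_preimage, mem_union, mem_prod, mem_inter_iff]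
  split_ifs <;> grind

theorem hatSet_twoWells (A₁ A₂ C : Set α) :
    hatSet (A₁ ×ˢ A₁ ∪ A₂ ×ˢ A₂ ∪ (A₁ ∩ A₂) ×ˢ C ∪ C ×ˢ (A₁ ∩ A₂)) = A₁ ×ˢ A₁ ∪ A₂ ×ˢ A₂ := by
  ext ⟨x, y⟩
  simp only [hatSet, mem_union, mem_prod, mem_inter_iff, and_self, mem_ofPred_eq]
  tauto

variable [AddCommGroup α] [Module ℝ α]

theorem sepConvex_twoWells (h₁ : Convex ℝ A₁) (h₂ : Convex ℝ A₂) (hC : Convex ℝ C)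
    (h₁C : A₁ ⊆ C) (h₂C : A₂ ⊆ C) :
    SepConvex (A₁ ×ˢ A₁ ∪ A₂ ×ˢ A₂ ∪ (A₁ ∩ A₂) ×ˢ C ∪ C ×ˢ (A₁ ∩ A₂)) := by
  refine sepConvex_of_swap_preimage_eq swap_preimage_twoWells fun x => ?_
  classical
  rw [mk_preimage_twoWells h₁C h₂C]
  split_ifs
  exacts [hC, h₁, h₂, h₁.inter h₂, convex_empty]

end TwoWells

theorem sepConvexHull_two_wells_general {m : ℕ} (A₁ A₂ : Set (Fin m → ℝ))
    (h₁ : Convex ℝ A₁) (h₂ : Convex ℝ A₂) :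
    sepConvexHull ((A₁ ×ˢ A₁) ∪ (A₂ ×ˢ A₂)) =
      (A₁ ×ˢ A₁) ∪ (A₂ ×ˢ A₂) ∪ ((A₁ ∩ A₂) ×ˢ (convexHull ℝ (A₁ ∪ A₂))) ∪
        ((convexHull ℝ (A₁ ∪ A₂)) ×ˢ (A₁ ∩ A₂)) ∧
    hatSet (sepConvexHull ((A₁ ×ˢ A₁) ∪ (A₂ ×ˢ A₂))) = (A₁ ×ˢ A₁) ∪ (A₂ ×ˢ A₂) := by
  set E := A₁ ×ˢ A₁ ∪ A₂ ×ˢ A₂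
  set C := convexHull ℝ (A₁ ∪ A₂)
  have hE := subset_sepConvexHull E
  have hF := sepConvex_sepConvexHull E
  have hcross₁ : (A₁ ∩ A₂) ×ˢ (A₁ ∪ A₂) ⊆ E := by
    rintro ⟨x, y⟩ ⟨⟨hx₁, hx₂⟩, hy₁ | hy₂⟩
    exacts [Or.inl ⟨hx₁, hy₁⟩, Or.inr ⟨hx₂, hy₂⟩]
  have hcross₂ : (A₁ ∪ A₂) ×ˢ (A₁ ∩ A₂) ⊆ E := by
    rintro ⟨x, y⟩ ⟨hx₁ | hx₂, ⟨hy₁, hy₂⟩⟩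
    exacts [Or.inl ⟨hx₁, hy₁⟩, Or.inr ⟨hx₂, hy₂⟩]
  have hhull : sepConvexHull E = E ∪ (A₁ ∩ A₂) ×ˢ C ∪ C ×ˢ (A₁ ∩ A₂) := by
    refine (sepConvexHull_subset (subset_union_left.trans subset_union_left) ?_).antisymm ?_
    · exact sepConvex_twoWells h₁ h₂ (convex_convexHull ℝ _)
        (subset_union_left.trans (subset_convexHull ℝ _))
        (subset_union_right.trans (subset_convexHull ℝ _))
    · exact union_subset (union_subset hE (hF.prod_convexHull_subset (hcross₁.trans hE)))
        (hF.convexHull_prod_subset (hcross₂.trans hE))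
  exact ⟨hhull, hhull ▸ hatSet_twoWells A₁ A₂ C⟩

theorem sepConvexHull_two_wells {m : ℕ} (A₁ A₂ : Set (Fin m → ℝ))
    (h₁ : Convex ℝ A₁) (h₂ : Convex ℝ A₂) (hne : (A₁ ∩ A₂).Nonempty) :
    sepConvexHull ((A₁ ×ˢ A₁) ∪ (A₂ ×ˢ A₂)) =
      (A₁ ×ˢ A₁) ∪ (A₂ ×ˢ A₂) ∪ ((A₁ ∩ A₂) ×ˢ (convexHull ℝ (A₁ ∪ A₂))) ∪
        ((convexHull ℝ (A₁ ∪ A₂)) ×ˢ (A₁ ∩ A₂)) ∧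
    hatSet (sepConvexHull ((A₁ ×ˢ A₁) ∪ (A₂ ×ˢ A₂))) = (A₁ ×ˢ A₁) ∪ (A₂ ×ˢ A₂) :=
  sepConvexHull_two_wells_general A₁ A₂ h₁ h₂
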